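/- arXiv:1706.01390 — 2 statements merged into one kernel-verified Lean document; each statement's English description precedes it below -/
import Mathlib

section
/- Let V and W be finite-dimensional real inner product spaces and B : V × V → W a bilinear alternating map. Let N be the group with underlying set V × W and product (v,w)·(v',w') = (v+v', w+w' + ½B(v,v')), so that (v,w)^{-1} = (-v,-w), and let Lebesgue measure dv dw be its Haar measure. Define convolution by (F * G)(x) = ∫_N F(y) G(y^{-1}·x) dy. Let s be a linear subspace of W, W' = s^⊥ its orthogonal complement in W, π : W → W' the orthogonal projection, and let N' be the group with underlying set V × W' and product (v,w')·(v',w'') = (v+v', w'+w'' + ½π(B(v,v'))), with convolution *' defined analogously using Lebesgue measure on V × W'. For F ∈ S(V × W) define (R^s F)(v,w') = ∫_s F(v, w' + σ) dσ, using Lebesgue measure on s. Then for all F, G ∈ S(V × W): R^s(F * G) = (R^s F) *' (R^s G). -/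
/-!
Integrating out `s` commutes with the convolution because the translates `(v, w + σ)`, `σ ∈ s`,
are exactly the fibres of the quotient map `N → N'`, `(v, w) ↦ (v, π w)`, which is a group
homomorphism. Concretely, Fubini exchanges `∫_s` with the convolution integral; the inner
integral `∫_s G(a, b + σ) dσ` depends on `b` only through `π b` (translation invariance on `s`);
and disintegrating Lebesgue measure on `V × W` along `W ≅ s × sᗮ` turns `∫ F(y) H(y₁, π y₂) dy`
into `∫ (R^s F)(q) H(q) dq`. Schwartz decay makes the `s`-slices of `G` uniformly integrable,
which justifies the exchange.
-/

open MeasureTheory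

/-- Group convolution on the two-step nilpotent group `V × W` with product
`(v,w)·(v',w') = (v+v', w+w'+½B(v,v'))`:
`(F * G)(x) = ∫ F(y) G(y⁻¹·x) dy`. -/
noncomputable def nilConv {V W : Type*}
    [NormedAddCommGroup V] [NormedSpace ℝ V] [MeasureSpace V]
    [NormedAddCommGroup W] [NormedSpace ℝ W] [MeasureSpace W]
    (B : V →ₗ[ℝ] V →ₗ[ℝ] W) (F G : V × W → ℂ) : V × W → ℂ :=
  fun x => ∫ y : V × W, F y * G (x.1 - y.1, x.2 - y.2 - (2⁻¹ : ℝ) • B y.1 x.1)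

/-- The transform `R^s F (v,w') = ∫_s F(v, w'+σ) dσ`. -/
noncomputable def radonS {V W : Type*}
    [NormedAddCommGroup V] [NormedSpace ℝ V]
    [NormedAddCommGroup W] [InnerProductSpace ℝ W]
    (s : Submodule ℝ W) [MeasureSpace s]
    (F : V × W → ℂ) : V × ↥sᗮ → ℂ :=
  fun p => ∫ σ : s, F (p.1, (p.2 : W) + (σ : W))

namespace Submodule

variable {W : Type*} [NormedAddCommGroup W] [InnerProductSpace ℝ W]

theorem norm_add_orthogonalProjectionOnto_le (s : Submodule ℝ W) [s.HasOrthogonalProjection]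
    (b : W) (σ : s) : ‖σ + s.orthogonalProjectionOnto b‖ ≤ ‖b + σ‖ :=
  calc ‖σ + s.orthogonalProjectionOnto b‖ = ‖s.orthogonalProjectionOnto (b + σ)‖ := by
        rw [map_add, orthogonalProjectionOnto_mem_subspace_eq_self, add_comm]
    _ ≤ ‖b + σ‖ := s.norm_orthogonalProjectionOnto_apply_le _

variable [FiniteDimensional ℝ W] [MeasurableSpace W] [BorelSpace W]
  (s : Submodule ℝ W) [MeasurableSpace s] [BorelSpace s] [MeasurableSpace sᗮ] [BorelSpace sᗮ]

noncomputable def addOrthogonalMeasurableEquiv : s × sᗮ ≃ᵐ W :=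
  (MeasurableEquiv.toLp 2 (s × sᗮ)).trans
    s.orthogonalDecomposition.symm.toHomeomorph.toMeasurableEquiv

@[simp]
theorem addOrthogonalMeasurableEquiv_apply (p : s × sᗮ) :
    s.addOrthogonalMeasurableEquiv p = (p.1 : W) + p.2 := by
  simp [addOrthogonalMeasurableEquiv]

theorem measurePreserving_addOrthogonalMeasurableEquiv :
    MeasurePreserving s.addOrthogonalMeasurableEquiv :=
  s.orthogonalDecomposition.symm.measurePreserving.comp (WithLp.volume_preserving_toLp s sᗮ)

end Submodule

theorem SchwartzMap.exists_norm_le_mul_one_add_norm_rpow_neg {E F : Type*}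
    [NormedAddCommGroup E] [NormedSpace ℝ E] [NormedAddCommGroup F] [NormedSpace ℝ F]
    (f : SchwartzMap E F) (k : ℕ) :
    ∃ D, 0 ≤ D ∧ ∀ x, ‖f x‖ ≤ D * (1 + ‖x‖) ^ (-(k : ℝ)) := by
  refine ⟨2 ^ k * ((Finset.Iic (k, 0)).sup fun m => SchwartzMap.seminorm ℝ m.1 m.2) f,
    by positivity, fun x => ?_⟩
  have h := SchwartzMap.one_add_le_sup_seminorm_apply (𝕜 := ℝ) (m := (k, 0)) le_rfl le_rfl f x
  rw [norm_iteratedFDeriv_zero] at h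
  rwa [Real.rpow_neg (by positivity), Real.rpow_natCast, ← div_eq_mul_inv,
    le_div_iff₀ (by positivity), mul_comm]

section Slices

variable {V W : Type*} [NormedAddCommGroup V] [NormedSpace ℝ V]
  [NormedAddCommGroup W] [InnerProductSpace ℝ W] [FiniteDimensional ℝ W]
  (s : Submodule ℝ W) [MeasurableSpace s] [BorelSpace s]

theorem radonS_apply_orthogonalProjection (F : V × W → ℂ) (a : V) (b : W) :
    radonS s F (a, sᗮ.orthogonalProjectionOnto b) = ∫ σ : s, F (a, b + σ) := by
  have hb (σ : s) : b + σ =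
      sᗮ.orthogonalProjectionOnto b + ((σ + s.orthogonalProjectionOnto b : s) : W) := by
    have := s.starProjection_add_starProjection_orthogonal b
    simp only [Submodule.starProjection_apply] at this
    rw [Submodule.coe_add]
    linear_combination (norm := module) -this
  simp only [hb]
  exact (integral_add_right_eq_self (fun σ : s => F (a, sᗮ.orthogonalProjectionOnto b + σ)) _).symm

theorem radonS_mul_comp_orthogonalProjection (F : V × W → ℂ) (H : V × sᗮ → ℂ) (q : V × sᗮ) :
    radonS s (fun y => F y * H (y.1, sᗮ.orthogonalProjectionOnto y.2)) q =
      radonS s F q * H q := by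
  have hπ (σ : s) : sᗮ.orthogonalProjectionOnto ((q.2 : W) + σ) = q.2 := by
    rw [map_add, Submodule.orthogonalProjectionOnto_mem_subspace_eq_self,
      Submodule.orthogonalProjectionOnto_apply_of_mem_orthogonal
        (s.le_orthogonal_orthogonal σ.2), add_zero]
  simp only [radonS, hπ, integral_mul_const]

theorem SchwartzMap.exists_integral_norm_slice_le {F : Type*} [NormedAddCommGroup F]
    [NormedSpace ℝ F] (G : SchwartzMap (V × W) F) :
    ∃ C, ∀ x : V × W, Integrable (fun σ : s => G (x.1, x.2 + σ)) ∧
      ∫ σ : s, ‖G (x.1, x.2 + σ)‖ ≤ C := by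
  obtain ⟨D, hD0, hD⟩ := G.exists_norm_le_mul_one_add_norm_rpow_neg (Module.finrank ℝ s + 1)
  set g : s → ℝ := fun σ => D * (1 + ‖σ‖) ^ (-((Module.finrank ℝ s + 1 : ℕ) : ℝ))
  have hg : Integrable g := (integrable_one_add_norm (by push_cast; linarith)).const_mul D
  -- the decay of `G` along `x + s` is centred at the projection of `x.2` onto `s`
  have hGg (x : V × W) (σ : s) : ‖G (x.1, x.2 + σ)‖ ≤ g (σ + s.orthogonalProjectionOnto x.2) := by
    refine (hD _).trans (mul_le_mul_of_nonneg_left ?_ hD0)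
    refine Real.rpow_le_rpow_of_nonpos (by positivity) ?_ (neg_nonpos.2 (by positivity))
    grw [s.norm_add_orthogonalProjectionOnto_le, ← norm_snd_le (x.1, x.2 + (σ : W))]
  have hint (x : V × W) : Integrable (fun σ : s => G (x.1, x.2 + σ)) :=
    (hg.comp_add_right _).mono' (by fun_prop) (.of_forall (hGg x))
  refine ⟨∫ σ, g σ, fun x => ⟨hint x, ?_⟩⟩
  calc ∫ σ : s, ‖G (x.1, x.2 + σ)‖ ≤ ∫ σ, g (σ + s.orthogonalProjectionOnto x.2) :=
        integral_mono (hint x).norm (hg.comp_add_right _) (hGg x)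
    _ = ∫ σ, g σ := integral_add_right_eq_self g _

variable [MeasurableSpace V] [BorelSpace V]

theorem stronglyMeasurable_radonS [MeasurableSpace sᗮ] [BorelSpace sᗮ] {F : V × W → ℂ}
    (hF : Continuous F) : StronglyMeasurable (radonS s F) :=
  StronglyMeasurable.integral_prod_right (f := fun (q : V × sᗮ) (σ : s) => F (q.1, q.2 + σ))
    (by fun_prop : Continuous fun p : (V × sᗮ) × s => F (p.1.1, p.1.2 + p.2)).stronglyMeasurable

variable [MeasurableSpace W] [BorelSpace W]

theorem integrable_prod_mul_slice {X : Type*} [MeasureSpace X] {F : X → ℂ} (hF : Integrable F)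
    (G : SchwartzMap (V × W) ℂ) {φ : X → V × W} (hφ : Measurable φ) :
    Integrable (fun p : X × s => F p.1 * G ((φ p.1).1, (φ p.1).2 + p.2))
      ((volume : Measure X).prod volume) := by
  obtain ⟨C, hC⟩ := G.exists_integral_norm_slice_le s
  have hmeas : AEStronglyMeasurable (fun p : X × s => F p.1 * G ((φ p.1).1, (φ p.1).2 + p.2))
      ((volume : Measure X).prod volume) :=
    hF.aestronglyMeasurable.comp_fst.mul
      (G.continuous.measurable.comp (by fun_prop)).aestronglyMeasurable
  refine (integrable_prod_iff hmeas).2 ⟨.of_forall fun y => (hC (φ y)).1.const_mul (F y), ?_⟩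
  refine (hF.norm.mul_const C).mono' hmeas.norm.integral_prod_right' (.of_forall fun y => ?_)
  simp only [norm_mul, integral_const_mul, norm_norm,
    Real.norm_of_nonneg (integral_nonneg fun _ => norm_nonneg _)]
  exact mul_le_mul_of_nonneg_left (hC (φ y)).2 (norm_nonneg _)

end Slices

section Fibres

variable {V W : Type*} [NormedAddCommGroup V] [NormedSpace ℝ V] [MeasureSpace V]
  [SFinite (volume : Measure V)]
  [NormedAddCommGroup W] [InnerProductSpace ℝ W] [FiniteDimensional ℝ W]
  [MeasurableSpace W] [BorelSpace W]
  (s : Submodule ℝ W) [MeasurableSpace s] [BorelSpace s] [MeasurableSpace sᗮ] [BorelSpace sᗮ]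

theorem integral_radonS {f : V × W → ℂ} (hf : Integrable f) :
    ∫ q, radonS s f q = ∫ x, f x := by
  let Ψ : (V × sᗮ) × s ≃ᵐ V × W := MeasurableEquiv.prodAssoc.trans
    ((MeasurableEquiv.refl V).prodCongr
      (MeasurableEquiv.prodComm.trans s.addOrthogonalMeasurableEquiv))
  have hΨ : MeasurePreserving Ψ := ((MeasurePreserving.id volume).prod
    (s.measurePreserving_addOrthogonalMeasurableEquiv.comp Measure.measurePreserving_swap)).comp
    volume_preserving_prodAssoc
  have hΨ_apply (q : V × sᗮ) (σ : s) : Ψ (q, σ) = (q.1, (q.2 : W) + σ) := by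
    change (q.1, s.addOrthogonalMeasurableEquiv (σ, q.2)) = _
    simp [add_comm]
  calc ∫ q, radonS s f q = ∫ q, ∫ σ : s, f (Ψ (q, σ)) := by simp only [hΨ_apply]; rfl
    _ = ∫ z, f (Ψ z) :=
      (integral_prod _ ((hΨ.integrable_comp_emb Ψ.measurableEmbedding).2 hf)).symm
    _ = ∫ x, f x := hΨ.integral_comp' f

theorem integral_mul_comp_orthogonalProjection {F : V × W → ℂ} (hF : Integrable F)
    {H : V × sᗮ → ℂ} (hH : StronglyMeasurable H) {C : ℝ} (hHC : ∀ q, ‖H q‖ ≤ C) :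
    ∫ y, F y * H (y.1, sᗮ.orthogonalProjectionOnto y.2) = ∫ q, radonS s F q * H q := by
  have hmeas : StronglyMeasurable fun y : V × W => H (y.1, sᗮ.orthogonalProjectionOnto y.2) :=
    hH.comp_measurable (by fun_prop)
  rw [← integral_radonS s (hF.mul_bdd hmeas.aestronglyMeasurable (.of_forall fun y => hHC _))]
  simp only [radonS_mul_comp_orthogonalProjection]

end Fibres

theorem stmt8_general
    {V W : Type*}
    [NormedAddCommGroup V] [InnerProductSpace ℝ V] [FiniteDimensional ℝ V]
    [MeasurableSpace V] [BorelSpace V]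
    [NormedAddCommGroup W] [InnerProductSpace ℝ W] [FiniteDimensional ℝ W]
    [MeasurableSpace W] [BorelSpace W]
    (B : V →ₗ[ℝ] V →ₗ[ℝ] W)
    (s : Submodule ℝ W) [MeasurableSpace s] [BorelSpace s]
    [MeasurableSpace ↥sᗮ] [BorelSpace ↥sᗮ]
    (F G : SchwartzMap (V × W) ℂ) :
    ∀ p : V × ↥sᗮ,
      radonS s (nilConv B (⇑F) (⇑G)) p =
        nilConv (B.compr₂ ((Submodule.orthogonalProjectionOnto sᗮ : W →L[ℝ] ↥sᗮ) : W →ₗ[ℝ] ↥sᗮ))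
          (radonS s (⇑F)) (radonS s (⇑G)) p := by
  rintro ⟨v, w⟩
  -- instance search does not see through `volume = volume.prod volume` on its own
  have : (volume : Measure (V × W)).IsAddHaarMeasure := Measure.prod.instIsAddHaarMeasure _ _
  set π := sᗮ.orthogonalProjectionOnto
  have hBv : Continuous fun u => B u v := (B.flip v).continuous_of_finiteDimensional
  let φ : V × W → V × W := fun y => (v - y.1, w - y.2 - (2⁻¹ : ℝ) • B y.1 v)
  let H : V × sᗮ → ℂ := fun q => radonS s G (v - q.1, w - q.2 - (2⁻¹ : ℝ) • π (B q.1 v))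
  obtain ⟨C, hC⟩ := G.exists_integral_norm_slice_le s
  have hGH (y : V × W) : ∫ σ : s, G ((φ y).1, (φ y).2 + σ) = H (y.1, π y.2) := by
    rw [← radonS_apply_orthogonalProjection]
    simp [H, φ, π, map_sub, map_smul]
  calc radonS s (nilConv B F G) (v, w)
      = ∫ σ : s, ∫ y, F y * G ((φ y).1, (φ y).2 + σ) := by
        refine integral_congr_ae (.of_forall fun σ => integral_congr_ae (.of_forall fun y => ?_))
        simp only [φ]
        abel_nf
    _ = ∫ y, ∫ σ : s, F y * G ((φ y).1, (φ y).2 + σ) :=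
        (integral_integral_swap (integrable_prod_mul_slice s F.integrable G (by fun_prop))).symm
    _ = ∫ y, F y * H (y.1, π y.2) := by simp only [integral_const_mul, hGH]
    _ = ∫ q, radonS s F q * H q :=
        integral_mul_comp_orthogonalProjection s F.integrable
          ((stronglyMeasurable_radonS s G.continuous).comp_measurable (by fun_prop))
          (fun q => (norm_integral_le_integral_norm _).trans (hC (_, _)).2)
    _ = _ := rfl

theorem stmt8
    {V W : Type*}
    [NormedAddCommGroup V] [InnerProductSpace ℝ V] [FiniteDimensional ℝ V]
    [MeasurableSpace V] [BorelSpace V]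
    [NormedAddCommGroup W] [InnerProductSpace ℝ W] [FiniteDimensional ℝ W]
    [MeasurableSpace W] [BorelSpace W]
    (B : V →ₗ[ℝ] V →ₗ[ℝ] W) (hB : ∀ v : V, B v v = 0)
    (s : Submodule ℝ W) [MeasurableSpace s] [BorelSpace s]
    [MeasurableSpace ↥sᗮ] [BorelSpace ↥sᗮ]
    (F G : SchwartzMap (V × W) ℂ) :
    ∀ p : V × ↥sᗮ,
      radonS s (nilConv B (⇑F) (⇑G)) p =
        nilConv (B.compr₂ ((Submodule.orthogonalProjectionOnto sᗮ : W →L[ℝ] ↥sᗮ) : W →ₗ[ℝ] ↥sᗮ))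
          (radonS s (⇑F)) (radonS s (⇑G)) p :=
  stmt8_general B s F G
end

section
/- Let d ≥ 1 and let Σ ⊆ ℝ^d be a closed set. Let (c_i)_{i∈ℕ} be complex numbers and suppose that for each i ∈ ℕ and each M ∈ ℕ there is a function h_i^{(M)} ∈ S(ℝ^d) such that: (a) the restriction of h_i^{(M)} to Σ is a function m_i independent of M; (b) for every M ∈ ℕ there exist constants C_M > 0 and A_M ∈ ℕ, independent of i, with ‖h_i^{(M)}‖_{S(ℝ^d),M} ≤ C_M (1+i)^{A_M} for all i; (c) for every N ∈ ℕ there is a constant C'_N with |c_i| ≤ C'_N (1+i)^{-N} for all i. Then the series Σ_{i∈ℕ} c_i m_i(ξ) converges absolutely for every ξ ∈ Σ, and there exists a function f ∈ S(ℝ^d) such that f(ξ) = Σ_{i∈ℕ} c_i m_i(ξ) for every ξ ∈ Σ. -/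
open MeasureTheory

/-- The Schwartz seminorm of order `M`. -/
noncomputable def schwartzSeminormM {E : Type*} [NormedAddCommGroup E] [NormedSpace ℝ E]
    (f : E → ℂ) (M : ℕ) : ℝ :=
  ⨆ p : Fin (M + 1) × E, (1 + ‖p.2‖) ^ M * ‖iteratedFDeriv ℝ (p.1 : ℕ) f p.2‖

/-!
Choose the order `ψ i` of the approximant `h i (ψ i)` growing so slowly with `i` that the constants
`C_M`, `A_M` of (b) at `M = ψ i` are beaten by the decay of `c i`: then every Schwartz seminorm of
`c i • h i (ψ i)` is eventually `O((1 + i)⁻²)`, the series `∑ c i • h i (ψ i)` converges in every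
seminorm, and its sum is a Schwartz function which agrees with `∑ c i m_i` on `Σ` by (a).
-/

open Filter SchwartzMap

theorem exists_tendsto_atTop_eventually_apply_le (D : ℕ → ℝ) :
    ∃ ψ : ℕ → ℕ, Tendsto ψ atTop atTop ∧ ∀ᶠ i in atTop, D (ψ i) ≤ i := by
  let S : ℕ → Set ℕ := fun i => {M | M ≤ i ∧ ∀ m ≤ M, D m ≤ i}
  have hS_bdd : ∀ i, BddAbove (S i) := fun i => ⟨i, fun _ hM => hM.1⟩
  have hS_mem : ∀ M, ∀ᶠ i in atTop, M ∈ S i := by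
    intro M
    filter_upwards [eventually_ge_atTop M,
      eventually_ge_atTop ((Finset.range (M + 1)).sup fun m => ⌈D m⌉₊)] with i hMi hDi
    refine ⟨hMi, fun m hm => (Nat.le_ceil (D m)).trans ?_⟩
    exact_mod_cast (Finset.le_sup (f := fun m => ⌈D m⌉₊) (by simpa [Nat.lt_succ_iff])).trans hDi
  refine ⟨fun i => sSup (S i), tendsto_atTop.2 fun M => ?_, ?_⟩
  · filter_upwards [hS_mem M] with i hi using le_csSup (hS_bdd i) hi
  · filter_upwards [hS_mem 0] with i hi using (Nat.sSup_mem ⟨0, hi⟩ (hS_bdd i)).2 _ le_rfl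

theorem summable_one_add_nat_zpow_neg_two :
    Summable fun i : ℕ => ((1 : ℝ) + i) ^ (-2 : ℤ) := by
  refine ((summable_nat_add_iff 1).2 (Real.summable_nat_pow_inv.2 one_lt_two)).congr fun i => ?_
  push_cast
  rw [zpow_neg, add_comm]
  rfl

theorem mul_le_zpow_neg_two_of_le {a s C C' t : ℝ} {A : ℕ} (ht : 0 < t) (ha₀ : 0 ≤ a)
    (ha : a ≤ C' * t ^ (-((A + 3 : ℕ) : ℤ))) (hs₀ : 0 ≤ s) (hs : s ≤ C * t ^ A)
    (hCC' : C * C' ≤ t) : a * s ≤ t ^ (-2 : ℤ) :=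
  calc a * s ≤ C' * t ^ (-((A + 3 : ℕ) : ℤ)) * (C * t ^ A) :=
        mul_le_mul ha hs hs₀ (ha₀.trans ha)
    _ = C * C' * t ^ (-3 : ℤ) := by
        rw [← zpow_natCast t A, mul_mul_mul_comm, ← zpow_add₀ ht.ne']
        push_cast
        ring_nf
    _ ≤ t * t ^ (-3 : ℤ) := by gcongr
    _ = t ^ (-2 : ℤ) := by
        rw [← zpow_one_add₀ ht.ne']
        norm_num

section SchwartzSeries

variable {ι E F : Type*} [NormedAddCommGroup E] [NormedSpace ℝ E]
  [NormedAddCommGroup F] [NormedSpace ℝ F]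
  (𝕜 : Type*) [NormedField 𝕜] [NormedSpace 𝕜 F] [SMulCommClass ℝ 𝕜 F]

theorem SchwartzMap.summable_norm_apply {g : ι → 𝓢(E, F)}
    (hg : Summable fun i => SchwartzMap.seminorm 𝕜 0 0 (g i)) (x : E) :
    Summable fun i => ‖g i x‖ :=
  hg.of_nonneg_of_le (fun _ => norm_nonneg _) fun i => norm_le_seminorm 𝕜 (g i) x

variable [CompleteSpace F]

theorem SchwartzMap.exists_hasSum_apply_of_summable_seminorm {g : ι → 𝓢(E, F)}
    (hg : ∀ k n, Summable fun i => SchwartzMap.seminorm 𝕜 k n (g i)) :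
    ∃ f : 𝓢(E, F), ∀ x, HasSum (fun i => g i x) (f x) := by
  have hbound : ∀ n i x, ‖iteratedFDeriv ℝ n (g i) x‖ ≤ SchwartzMap.seminorm 𝕜 0 n (g i) :=
    fun n i x => norm_iteratedFDeriv_le_seminorm 𝕜 (g i) n x
  have hsmooth : ContDiff ℝ ((⊤ : ℕ∞) : WithTop ℕ∞) fun x => ∑' i, g i x :=
    contDiff_tsum (fun i => (g i).smooth ⊤) (fun n _ => hg 0 n) fun n i x _ => hbound n i x
  have hdecay : ∀ k n : ℕ, ∃ B, ∀ x,
      ‖x‖ ^ k * ‖iteratedFDeriv ℝ n (fun y => ∑' i, g i y) x‖ ≤ B := by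
    refine fun k n => ⟨∑' i, SchwartzMap.seminorm 𝕜 k n (g i), fun x => ?_⟩
    have hsum : Summable fun i => ‖iteratedFDeriv ℝ n (g i) x‖ :=
      (hg 0 n).of_nonneg_of_le (fun _ => norm_nonneg _) fun i => hbound n i x
    rw [iteratedFDeriv_tsum_apply (fun i => (g i).smooth ⊤) (fun n _ => hg 0 n)
      (fun n i x _ => hbound n i x) le_top x]
    calc ‖x‖ ^ k * ‖∑' i, iteratedFDeriv ℝ n (g i) x‖
        ≤ ∑' i, ‖x‖ ^ k * ‖iteratedFDeriv ℝ n (g i) x‖ := by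
          rw [tsum_mul_left]
          gcongr
          exact norm_tsum_le_tsum_norm hsum
      _ ≤ ∑' i, SchwartzMap.seminorm 𝕜 k n (g i) :=
          (hsum.mul_left _).tsum_le_tsum (fun i => le_seminorm 𝕜 k n (g i) x) (hg k n)
  exact ⟨⟨fun x => ∑' i, g i x, hsmooth, hdecay⟩, fun x =>
    (summable_norm_apply 𝕜 (hg 0 0) x).of_norm.hasSum⟩

end SchwartzSeries

section SeminormM

variable {E : Type*} [NormedAddCommGroup E] [NormedSpace ℝ E]

theorem SchwartzMap.seminorm_le_schwartzSeminormM (f : 𝓢(E, ℂ)) {k n M : ℕ} (hk : k ≤ M)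
    (hn : n ≤ M) : SchwartzMap.seminorm ℂ k n f ≤ schwartzSeminormM f M := by
  have hbdd : BddAbove (Set.range fun p : Fin (M + 1) × E =>
      (1 + ‖p.2‖) ^ M * ‖iteratedFDeriv ℝ (p.1 : ℕ) f p.2‖) := by
    refine ⟨2 ^ M * (Finset.Iic (M, M)).sup (fun m => SchwartzMap.seminorm ℂ m.1 m.2) f, ?_⟩
    rintro _ ⟨⟨j, x⟩, rfl⟩
    exact one_add_le_sup_seminorm_apply (m := (M, M)) le_rfl (Nat.lt_succ_iff.1 j.isLt) f x
  refine seminorm_le_bound ℂ k n f (Real.iSup_nonneg fun _ => by positivity) fun x => ?_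
  calc ‖x‖ ^ k * ‖iteratedFDeriv ℝ n f x‖
      ≤ (1 + ‖x‖) ^ M * ‖iteratedFDeriv ℝ n f x‖ := by
        gcongr
        calc ‖x‖ ^ k ≤ (1 + ‖x‖) ^ k := by gcongr; linarith
          _ ≤ (1 + ‖x‖) ^ M := pow_le_pow_right₀ (by linarith [norm_nonneg x]) hk
    _ ≤ schwartzSeminormM f M := le_ciSup hbdd (⟨n, Nat.lt_succ_of_le hn⟩, x)

end SeminormM

theorem stmt15_general (d : ℕ) (Sig : Set (EuclideanSpace ℝ (Fin d)))
    (c : ℕ → ℂ)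
    (h : ℕ → ℕ → SchwartzMap (EuclideanSpace ℝ (Fin d)) ℂ)
    -- (a) the restriction of h i M to Σ is independent of M
    (ha : ∀ (i M M' : ℕ), ∀ ξ ∈ Sig, h i M ξ = h i M' ξ)
    -- (b) the M-th Schwartz seminorms of h i M grow polynomially in i
    (hb : ∀ M : ℕ, ∃ C > (0 : ℝ), ∃ A : ℕ, ∀ i : ℕ,
      schwartzSeminormM (⇑(h i M)) M ≤ C * ((1 : ℝ) + i) ^ A)
    -- (c) the coefficients c i decay rapidly
    (hc : ∀ N : ℕ, ∃ C' : ℝ, ∀ i : ℕ, ‖c i‖ ≤ C' * ((1 : ℝ) + i) ^ (-(N : ℤ))) :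
    -- absolute convergence on Σ and existence of a Schwartz function whose
    -- restriction to Σ is the sum
    (∀ ξ ∈ Sig, Summable fun i : ℕ => ‖c i * h i 0 ξ‖) ∧
    ∃ f : SchwartzMap (EuclideanSpace ℝ (Fin d)) ℂ,
      ∀ ξ ∈ Sig, HasSum (fun i : ℕ => c i * h i 0 ξ) (f ξ) := by
  choose C _ A hCA using hb
  choose C' hC' using hc
  obtain ⟨ψ, hψ, hCψ⟩ := exists_tendsto_atTop_eventually_apply_le fun M => C M * C' (A M + 3)
  set g := fun i => c i • h i (ψ i)
  have hg : ∀ k n, Summable fun i => SchwartzMap.seminorm ℂ k n (g i) := by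
    refine fun k n => summable_one_add_nat_zpow_neg_two.of_norm_bounded_eventually_nat ?_
    filter_upwards [hψ.eventually_ge_atTop (max k n), hCψ] with i hkn hi
    rw [Real.norm_of_nonneg (apply_nonneg _ _), map_smul_eq_mul]
    exact mul_le_zpow_neg_two_of_le (by positivity) (norm_nonneg _) (hC' _ i) (apply_nonneg _ _)
      (((h i (ψ i)).seminorm_le_schwartzSeminormM (le_of_max_le_left hkn)
        (le_of_max_le_right hkn)).trans (hCA _ i)) (by linarith)
  have hg_eq : ∀ ξ ∈ Sig, ∀ i, g i ξ = c i * h i 0 ξ := fun ξ hξ i => by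
    simp only [g, smul_apply, smul_eq_mul, ha i (ψ i) 0 ξ hξ]
  obtain ⟨f, hf⟩ := exists_hasSum_apply_of_summable_seminorm ℂ hg
  refine ⟨fun ξ hξ => ?_, f, fun ξ hξ => ?_⟩
  · simpa only [hg_eq ξ hξ] using summable_norm_apply ℂ (hg 0 0) ξ
  · simpa only [hg_eq ξ hξ] using hf ξ

theorem stmt15 (d : ℕ) (hd : 1 ≤ d) (Sig : Set (EuclideanSpace ℝ (Fin d)))
    (hSig : IsClosed Sig) (c : ℕ → ℂ)
    (h : ℕ → ℕ → SchwartzMap (EuclideanSpace ℝ (Fin d)) ℂ)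
    -- (a) the restriction of h i M to Σ is independent of M
    (ha : ∀ (i M M' : ℕ), ∀ ξ ∈ Sig, h i M ξ = h i M' ξ)
    -- (b) the M-th Schwartz seminorms of h i M grow polynomially in i
    (hb : ∀ M : ℕ, ∃ C > (0 : ℝ), ∃ A : ℕ, ∀ i : ℕ,
      schwartzSeminormM (⇑(h i M)) M ≤ C * ((1 : ℝ) + i) ^ A)
    -- (c) the coefficients c i decay rapidly
    (hc : ∀ N : ℕ, ∃ C' : ℝ, ∀ i : ℕ, ‖c i‖ ≤ C' * ((1 : ℝ) + i) ^ (-(N : ℤ))) :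
    -- absolute convergence on Σ and existence of a Schwartz function whose
    -- restriction to Σ is the sum
    (∀ ξ ∈ Sig, Summable fun i : ℕ => ‖c i * h i 0 ξ‖) ∧
    ∃ f : SchwartzMap (EuclideanSpace ℝ (Fin d)) ℂ,
      ∀ ξ ∈ Sig, HasSum (fun i : ℕ => c i * h i 0 ξ) (f ξ) :=
  stmt15_general d Sig c h ha hb hc
end
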